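/- Let κ₀ > 0, ζ > 0, L > 0, s > 0, U > 0, J ∈ ℂ, w ∈ ℂ³ with Re(w·w) ≥ ζ s² and ‖w‖ ≤ L·s, and u ∈ ℂ³ with ‖u‖ ≤ U. Then the gradient of the three-dimensional pulled-back Helmholtz kernel, v := exp(iκ₀√(w·w))·[ iκ₀·u/(4π·(w·w)) − u/(4π·(√(w·w))³) ]·J, satisfies ‖v‖ ≤ (|J|·U·exp(κ₀·L·s)/(4π))·( κ₀/(ζ·s²) + 1/(ζ^{3/2}·s³) ). -/

import Mathlib

/-!
Write `z = w·w`. Since `Re z ≥ ζ s² > 0`, we have `ζ s² ≤ |z| ≤ ‖w‖² ≤ (L s)²`, so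
`|√z| = √|z|` lies between `√(ζ s²)` and `L s`. The lower bounds control the two coefficients
`κ₀/|z|` and `1/|√z|³`, the upper one the growth `|exp(iκ₀√z)| ≤ exp(κ₀ |√z|)` of the
oscillatory factor.
-/

noncomputable section

open Complex MeasureTheory

/-- The complex-bilinear dot product `w · w = ∑ i, wᵢ²` on `ℂ^d`. -/
def cdot {d : ℕ} (w : EuclideanSpace ℂ (Fin d)) : ℂ := ∑ i, w i * w i

/-- The principal branch of the complex square root. -/
def csqrt (z : ℂ) : ℂ := z ^ (1 / 2 : ℂ)

lemma norm_cdot_le_sq {d : ℕ} (w : EuclideanSpace ℂ (Fin d)) : ‖cdot w‖ ≤ ‖w‖ ^ 2 :=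
  calc ‖cdot w‖ ≤ ∑ i, ‖w i * w i‖ := norm_sum_le _ _
    _ = ‖w‖ ^ 2 := by
      rw [EuclideanSpace.norm_sq_eq]
      simp only [norm_mul, sq]

lemma norm_csqrt (z : ℂ) : ‖csqrt z‖ = √‖z‖ := by
  rw [csqrt, show (1 / 2 : ℂ) = ((1 / 2 : ℝ) : ℂ) by norm_num, norm_cpow_real,
    Real.sqrt_eq_rpow]

lemma norm_csqrt_cdot_le {d : ℕ} (w : EuclideanSpace ℂ (Fin d)) : ‖csqrt (cdot w)‖ ≤ ‖w‖ := by
  rw [norm_csqrt]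
  exact Real.sqrt_le_iff.mpr ⟨norm_nonneg w, norm_cdot_le_sq w⟩

lemma norm_exp_I_mul_le {κ : ℝ} (hκ : 0 ≤ κ) (z : ℂ) :
    ‖exp (I * κ * z)‖ ≤ Real.exp (κ * ‖z‖) := by
  have hre : (I * κ * z).re = κ * -z.im := by simp [mul_re, mul_im]
  rw [norm_exp, hre]
  gcongr
  exact neg_le.mp (abs_le.mp (abs_im_le_norm z)).1

lemma norm_div_le_of_le_re {a : ℝ} {z : ℂ} (ha : 0 < a) (hz : a ≤ z.re) (c : ℂ) :
    ‖c / z‖ ≤ ‖c‖ / a := by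
  rw [norm_div]
  gcongr
  exact hz.trans (re_le_norm z)

lemma norm_one_div_csqrt_pow_three_le {a : ℝ} {z : ℂ} (ha : 0 < a) (hz : a ≤ z.re) :
    ‖1 / csqrt z ^ 3‖ ≤ 1 / √a ^ 3 := by
  rw [norm_div, norm_one, norm_pow, norm_csqrt]
  gcongr
  exact hz.trans (re_le_norm z)

lemma helmholtz_gradient_coeff_norm_le {κ a : ℝ} {z : ℂ} (hκ : 0 ≤ κ) (ha : 0 < a)
    (hz : a ≤ z.re) :
    ‖I * κ / (4 * Real.pi * z) - 1 / (4 * Real.pi * csqrt z ^ 3)‖ ≤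
      (κ / a + 1 / √a ^ 3) / (4 * Real.pi) := by
  have hfactor : I * κ / (4 * Real.pi * z) - 1 / (4 * Real.pi * csqrt z ^ 3) =
      (I * κ / z - 1 / csqrt z ^ 3) / (4 * Real.pi) := by
    rw [sub_div, div_div, div_div, mul_comm z, mul_comm (csqrt z ^ 3)]
  have hnorm : ‖(4 * Real.pi : ℂ)‖ = 4 * Real.pi := by
    rw [← ofReal_ofNat, ← ofReal_mul, norm_real, Real.norm_of_nonneg (by positivity)]
  have hnum : ‖I * (κ : ℂ)‖ = κ := by
    rw [norm_mul, norm_I, one_mul, norm_real, Real.norm_of_nonneg hκ]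
  rw [hfactor, norm_div, hnorm]
  gcongr
  calc ‖I * κ / z - 1 / csqrt z ^ 3‖ ≤ ‖I * κ / z‖ + ‖1 / csqrt z ^ 3‖ := norm_sub_le _ _
    _ ≤ ‖I * κ‖ / a + 1 / √a ^ 3 :=
      add_le_add (norm_div_le_of_le_re ha hz _) (norm_one_div_csqrt_pow_three_le ha hz)
    _ = κ / a + 1 / √a ^ 3 := by rw [hnum]

lemma sqrt_mul_sq_pow_three {ζ s : ℝ} (hζ : 0 ≤ ζ) (hs : 0 ≤ s) :
    √(ζ * s ^ 2) ^ 3 = ζ ^ ((3 : ℝ) / 2) * s ^ 3 := by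
  rw [Real.sqrt_mul hζ, Real.sqrt_sq hs, mul_pow, Real.sqrt_eq_rpow, ← Real.rpow_natCast,
    ← Real.rpow_mul hζ]
  norm_num

theorem helmholtz_kernel_gradient_3d_bound_general
    (κ₀ ζ L s U : ℝ) (hκ : 0 < κ₀) (hζ : 0 < ζ) (hs : 0 < s)
    (J : ℂ) (w u : EuclideanSpace ℂ (Fin 3))
    (hw1 : ζ * s ^ 2 ≤ (cdot w).re) (hw2 : ‖w‖ ≤ L * s) (hu : ‖u‖ ≤ U) :
    ‖(Complex.exp (Complex.I * (κ₀ : ℂ) * csqrt (cdot w)) * J) •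
        ((Complex.I * (κ₀ : ℂ) / (4 * (Real.pi : ℂ) * cdot w)) • u -
          (1 / (4 * (Real.pi : ℂ) * csqrt (cdot w) ^ 3)) • u)‖ ≤
      ‖J‖ * U * Real.exp (κ₀ * L * s) / (4 * Real.pi) *
        (κ₀ / (ζ * s ^ 2) + 1 / (ζ ^ ((3 : ℝ) / 2) * s ^ 3)) := by
  have hexp : ‖exp (I * κ₀ * csqrt (cdot w))‖ ≤ Real.exp (κ₀ * L * s) := by
    rw [mul_assoc κ₀]
    exact (norm_exp_I_mul_le hκ.le _).trans
      (by gcongr; exact (norm_csqrt_cdot_le w).trans hw2)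
  have hcoeff := helmholtz_gradient_coeff_norm_le hκ.le (by positivity) hw1
  rw [sqrt_mul_sq_pow_three hζ.le hs.le] at hcoeff
  rw [← sub_smul, norm_smul, norm_mul, norm_smul]
  calc ‖exp (I * κ₀ * csqrt (cdot w))‖ * ‖J‖ *
        (‖I * κ₀ / (4 * Real.pi * cdot w) - 1 / (4 * Real.pi * csqrt (cdot w) ^ 3)‖ * ‖u‖)
      ≤ Real.exp (κ₀ * L * s) * ‖J‖ *
        ((κ₀ / (ζ * s ^ 2) + 1 / (ζ ^ ((3 : ℝ) / 2) * s ^ 3)) / (4 * Real.pi) * U) := by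
        gcongr
    _ = _ := by ring

/-- Bound for the gradient of the three-dimensional pulled-back Helmholtz
kernel `v = exp(iκ₀√(w·w))·[iκ₀·u/(4π(w·w)) − u/(4π(√(w·w))³)]·J`: if `Re (w·w) ≥ ζ s²`,
`‖w‖ ≤ L s` and `‖u‖ ≤ U`, then
`‖v‖ ≤ (|J| U exp(κ₀ L s)/(4π))·(κ₀/(ζ s²) + 1/(ζ^{3/2} s³))`. -/
theorem helmholtz_kernel_gradient_3d_bound
    (κ₀ ζ L s U : ℝ) (hκ : 0 < κ₀) (hζ : 0 < ζ) (hL : 0 < L) (hs : 0 < s) (hU : 0 < U)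
    (J : ℂ) (w u : EuclideanSpace ℂ (Fin 3))
    (hw1 : ζ * s ^ 2 ≤ (cdot w).re) (hw2 : ‖w‖ ≤ L * s) (hu : ‖u‖ ≤ U) :
    ‖(Complex.exp (Complex.I * (κ₀ : ℂ) * csqrt (cdot w)) * J) •
        ((Complex.I * (κ₀ : ℂ) / (4 * (Real.pi : ℂ) * cdot w)) • u -
          (1 / (4 * (Real.pi : ℂ) * csqrt (cdot w) ^ 3)) • u)‖ ≤
      ‖J‖ * U * Real.exp (κ₀ * L * s) / (4 * Real.pi) *
        (κ₀ / (ζ * s ^ 2) + 1 / (ζ ^ ((3 : ℝ) / 2) * s ^ 3)) :=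
  helmholtz_kernel_gradient_3d_bound_general κ₀ ζ L s U hκ hζ hs J w u hw1 hw2 hu
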